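/- arXiv:0906.0649 — 4 statements merged into one kernel-verified Lean document; each statement's English description precedes it below -/
import Mathlib

section
/- Variance inequality: Let N be a CAT(0)-space and ν a Borel probability measure on N with finite second moment. Then for every z ∈ N, ∫ (d_N(z,x)² − d_N(b(ν),x)²) dν(x) ≥ d_N(z, b(ν))². -/
/-!
Let `F(x) = ∫ d(x,y)² dν(y)`. If `F p - F b ≥ c · d(b,p)²` for all `p`, apply this at the
midpoint `m` of `b` and `p` and integrate the CAT(0) inequality at `m`: this yields the same
bound with `c` replaced by `(1 + c)/2`. Starting from `c = 0` (minimality of `b`) the constants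
`1 - 2⁻ⁿ` tend to `1`.
-/

open MeasureTheory Metric

/-- A geodesic parametrized proportionally to arclength on `[0,1]`. -/
def IsGeodesic {N : Type*} [MetricSpace N] (γ : ℝ → N) : Prop :=
  ∀ s ∈ Set.Icc (0:ℝ) 1, ∀ t ∈ Set.Icc (0:ℝ) 1,
    dist (γ s) (γ t) = |s - t| * dist (γ 0) (γ 1)

/-- Any two points are joined by a geodesic. -/
def GeodesicSpace (N : Type*) [MetricSpace N] : Prop :=
  ∀ x y : N, ∃ γ : ℝ → N, IsGeodesic γ ∧ γ 0 = x ∧ γ 1 = y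

/-- A CAT(0)-space: a geodesic space satisfying the CAT(0) comparison inequality
(completeness is imposed separately as an instance). -/
def CAT0 (N : Type*) [MetricSpace N] : Prop :=
  GeodesicSpace N ∧ ∀ (x : N) (γ : ℝ → N), IsGeodesic γ →
    dist x (γ (1/2)) ^ 2 ≤
      (1/2) * dist x (γ 0) ^ 2 + (1/2) * dist x (γ 1) ^ 2
        - (1/4) * dist (γ 0) (γ 1) ^ 2

open Filter

section

variable {N : Type*} [MetricSpace N]

theorem CAT0.exists_midpoint (hN : CAT0 N) (b p : N) :
    ∃ m : N, dist b m = dist b p / 2 ∧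
      ∀ x, dist m x ^ 2 ≤ dist b x ^ 2 / 2 + dist p x ^ 2 / 2 - dist b p ^ 2 / 4 := by
  obtain ⟨γ, hγ, rfl, rfl⟩ := hN.1 b p
  refine ⟨γ (1/2), ?_, fun x => ?_⟩
  · rw [hγ 0 (by norm_num) (1/2) (by norm_num)]
    norm_num
    ring
  · have := hN.2 x γ hγ
    rw [dist_comm x, dist_comm x, dist_comm x] at this
    linarith

variable [MeasurableSpace N] (ν : Measure N)

/-- The Fréchet function of `ν`, whose minimizers are the barycenters of `ν`. -/
noncomputable def frechetFunction (x : N) : ℝ := ∫ y, dist x y ^ 2 ∂ν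

variable {ν}

theorem integrable_dist_sq [OpensMeasurableSpace N] [IsFiniteMeasure ν] {x₀ : N}
    (h : Integrable (fun y => dist x₀ y ^ 2) ν) (p : N) :
    Integrable (fun y => dist p y ^ 2) ν := by
  refine ((integrable_const (2 * dist p x₀ ^ 2)).add (h.const_mul 2)).mono'
    ((continuous_const.dist continuous_id).pow 2).aestronglyMeasurable
    (Eventually.of_forall fun y => ?_)
  rw [Real.norm_eq_abs, abs_of_nonneg (by positivity), Pi.add_apply]
  nlinarith [dist_triangle p x₀ y, sq_nonneg (dist p x₀ - dist x₀ y), dist_nonneg (x := p) (y := y)]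

theorem frechetFunction_le_of_forall_dist_sq_le [IsProbabilityMeasure ν]
    (hint : ∀ p, Integrable (fun y => dist p y ^ 2) ν) {b p m : N}
    (hm : ∀ x, dist m x ^ 2 ≤ dist b x ^ 2 / 2 + dist p x ^ 2 / 2 - dist b p ^ 2 / 4) :
    frechetFunction ν m ≤
      frechetFunction ν b / 2 + frechetFunction ν p / 2 - dist b p ^ 2 / 4 := by
  have hb := (hint b).div_const 2
  have hp := (hint p).div_const 2
  have hbp : Integrable (fun x => dist b x ^ 2 / 2 + dist p x ^ 2 / 2) ν := hb.add hp
  calc frechetFunction ν m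
      ≤ ∫ x, (dist b x ^ 2 / 2 + dist p x ^ 2 / 2 - dist b p ^ 2 / 4) ∂ν :=
        integral_mono (hint m) (hbp.sub (integrable_const _)) hm
    _ = _ := by
        rw [integral_sub hbp (integrable_const _), integral_add hb hp,
          integral_div, integral_div, integral_const, probReal_univ, one_smul]
        rfl

variable [IsProbabilityMeasure ν] (hN : CAT0 N)
  (hint : ∀ p, Integrable (fun y => dist p y ^ 2) ν)
  {b : N} (hb : ∀ x, frechetFunction ν b ≤ frechetFunction ν x)
include hN hint

theorem CAT0.one_add_div_two_mul_dist_sq_le {c : ℝ}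
    (hc : ∀ p, c * dist b p ^ 2 ≤ frechetFunction ν p - frechetFunction ν b) (p : N) :
    (1 + c) / 2 * dist b p ^ 2 ≤ frechetFunction ν p - frechetFunction ν b := by
  obtain ⟨m, hbm, hm⟩ := hN.exists_midpoint b p
  have hcm := hc m
  have hFm := frechetFunction_le_of_forall_dist_sq_le hint hm
  rw [hbm] at hcm
  linarith

include hb

theorem CAT0.one_sub_half_pow_mul_dist_sq_le (n : ℕ) (p : N) :
    (1 - (1 / 2 : ℝ) ^ n) * dist b p ^ 2 ≤ frechetFunction ν p - frechetFunction ν b := by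
  induction n generalizing p with
  | zero => simpa using hb p
  | succ n ih =>
    convert hN.one_add_div_two_mul_dist_sq_le hint ih p using 2
    ring

theorem CAT0.dist_sq_le_frechetFunction_sub (p : N) :
    dist b p ^ 2 ≤ frechetFunction ν p - frechetFunction ν b := by
  have hlim : Tendsto (fun n : ℕ => (1 - (1 / 2 : ℝ) ^ n) * dist b p ^ 2) atTop
      (nhds (dist b p ^ 2)) := by
    simpa using ((tendsto_pow_atTop_nhds_zero_of_lt_one (by norm_num : (0 : ℝ) ≤ 1 / 2)
      (by norm_num)).const_sub 1).mul_const (dist b p ^ 2)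
  exact le_of_tendsto hlim
    (Eventually.of_forall fun n => hN.one_sub_half_pow_mul_dist_sq_le hint hb n p)

end

theorem variance_inequality_general
    {N : Type*} [MetricSpace N] (hN : CAT0 N)
    [MeasurableSpace N] [BorelSpace N]
    (ν : Measure N) [IsProbabilityMeasure ν]
    (hmom : ∃ x₀ : N, Integrable (fun y => dist x₀ y ^ 2) ν)
    (b : N) (hb : ∀ x : N, ∫ y, dist b y ^ 2 ∂ν ≤ ∫ y, dist x y ^ 2 ∂ν)
    (z : N) :
    dist z b ^ 2 ≤ ∫ x, (dist z x ^ 2 - dist b x ^ 2) ∂ν := by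
  obtain ⟨x₀, hx₀⟩ := hmom
  have hint := integrable_dist_sq hx₀
  rw [integral_sub (hint z) (hint b), dist_comm]
  exact hN.dist_sq_le_frechetFunction_sub hint hb z

/-- Variance inequality in a CAT(0)-space: for any `z`,
`∫ (d(z,x)² − d(b(ν),x)²) dν(x) ≥ d(z,b(ν))²`. -/
theorem variance_inequality
    {N : Type*} [MetricSpace N] [CompleteSpace N] (hN : CAT0 N)
    [MeasurableSpace N] [BorelSpace N]
    (ν : Measure N) [IsProbabilityMeasure ν]
    (hmom : ∃ x₀ : N, Integrable (fun y => dist x₀ y ^ 2) ν)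
    (b : N) (hb : ∀ x : N, ∫ y, dist b y ^ 2 ∂ν ≤ ∫ y, dist x y ^ 2 ∂ν)
    (z : N) :
    dist z b ^ 2 ≤ ∫ x, (dist z x ^ 2 - dist b x ^ 2) ∂ν :=
  variance_inequality_general hN ν hmom b hb z
end

section
/- Let N be a CAT(0)-space. For each n ≥ 1, the map sₙ : Nⁿ → N sending (x₁,…,xₙ) to the inductive mean value of x₁,…,xₙ is (1/n)-Lipschitz with respect to the ℓ¹-distance d((xᵢ),(yᵢ)) = Σᵢ d_N(xᵢ,yᵢ) on Nⁿ. -/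
open MeasureTheory Metric

/-- `IsInductiveMean n x s` : `s` is the inductive mean value of the `n+1` points
`x 0, …, x n`, defined recursively by geodesic interpolation:
`s₁ = y₁` and `sₖ = γ(1/k)` where `γ` is the geodesic from `sₖ₋₁` to `yₖ`. -/
def IsInductiveMean {N : Type*} [MetricSpace N] : (n : ℕ) → (Fin (n+1) → N) → N → Prop
  | 0 => fun x s => s = x 0
  | n+1 => fun x s => ∃ s', IsInductiveMean n (fun i => x i.castSucc) s' ∧
      ∃ γ : ℝ → N, IsGeodesic γ ∧ γ 0 = s' ∧ γ 1 = x (Fin.last (n+1)) ∧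
        s = γ (1 / (n+2))

/-!
Geodesics with a common start point contract at the midpoint: the CAT(0) inequality, applied once
from `η(½)` to `γ` and once from `γ 1` to `η`, gives `d(γ ½, η ½) ≤ ½ d(γ 1, η 1)`. Passing through
the geodesic from `γ 0` to `η 1` turns this into midpoint convexity of `t ↦ d(γ t, η t)`, and a
continuous midpoint-convex function lies below its chords. In the inductive step the old mean is
moved by `1/(n+2)` towards the new point, so the old coordinates keep their weight
`(n+1)/(n+2) · 1/(n+1) = 1/(n+2)` and the new one receives `1/(n+2)`.
-/

open Set

theorem nonpos_of_midpoint_convex {g : ℝ → ℝ} {a b : ℝ} (hg : ContinuousOn g (Icc a b))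
    (hmid : ∀ s ∈ Icc a b, ∀ u ∈ Icc a b, g ((s + u) / 2) ≤ (g s + g u) / 2)
    (ha : g a ≤ 0) (hb : g b ≤ 0) {t : ℝ} (ht : t ∈ Icc a b) : g t ≤ 0 := by
  by_contra! hpos
  obtain ⟨c, hc, hmax⟩ := isCompact_Icc.exists_isMaxOn ⟨t, ht⟩ hg
  set S := Icc a b ∩ g ⁻¹' {g c}
  have hS : IsCompact S :=
    isCompact_Icc.of_isClosed_subset (hg.preimage_isClosed_of_isClosed isClosed_Icc
      isClosed_singleton) inter_subset_left
  -- The leftmost maximiser `t₀` is interior, and midpoint convexity fails around it.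
  obtain ⟨⟨ht₀a, ht₀b⟩, ht₀⟩ : sInf S ∈ S := hS.sInf_mem ⟨c, hc, rfl⟩
  set t₀ := sInf S
  replace ht₀ : g t₀ = g c := ht₀
  replace hmax : ∀ x ∈ Icc a b, g x ≤ g c := hmax
  have hgc : 0 < g c := hpos.trans_le (hmax t ht)
  have hat₀ : a < t₀ := lt_of_le_of_ne ht₀a fun h => by rw [← h] at ht₀; linarith
  have ht₀b : t₀ < b := lt_of_le_of_ne ht₀b fun h => by rw [h] at ht₀; linarith
  set h := min (t₀ - a) (b - t₀)
  have hh : 0 < h := lt_min (by linarith) (by linarith)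
  have hp : t₀ - h ∈ Icc a b := ⟨by linarith [min_le_left (t₀ - a) (b - t₀)], by linarith⟩
  have hq : t₀ + h ∈ Icc a b := ⟨by linarith, by linarith [min_le_right (t₀ - a) (b - t₀)]⟩
  have hgp : g (t₀ - h) < g c := by
    refine lt_of_le_of_ne (hmax _ hp) fun heq => ?_
    linarith [csInf_le hS.bddBelow (show t₀ - h ∈ S from ⟨hp, heq⟩)]
  have := hmid _ hp _ hq
  rw [show (t₀ - h + (t₀ + h)) / 2 = t₀ by ring] at this
  linarith [hmax _ hq]

namespace IsGeodesic

variable {N : Type*} [MetricSpace N] {γ : ℝ → N}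

theorem comp_affine (hγ : IsGeodesic γ) {a b : ℝ} (ha : a ∈ Icc (0 : ℝ) 1)
    (hb : b ∈ Icc (0 : ℝ) 1) : IsGeodesic fun u => γ ((1 - u) * a + u * b) := by
  have hmem : ∀ u ∈ Icc (0 : ℝ) 1, (1 - u) * a + u * b ∈ Icc (0 : ℝ) 1 := fun u hu =>
    ⟨by nlinarith [mul_nonneg (sub_nonneg.2 hu.2) ha.1, mul_nonneg hu.1 hb.1],
      by nlinarith [mul_nonneg (sub_nonneg.2 hu.2) (sub_nonneg.2 ha.2),
        mul_nonneg hu.1 (sub_nonneg.2 hb.2)]⟩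
  intro s hs t ht
  simp only [sub_zero, zero_mul, one_mul, sub_self, zero_add, add_zero]
  rw [hγ _ (hmem s hs) _ (hmem t ht), hγ a ha b hb,
    show (1 - s) * a + s * b - ((1 - t) * a + t * b) = (s - t) * (b - a) by ring,
    abs_mul, abs_sub_comm b a, mul_assoc]

theorem continuousOn (hγ : IsGeodesic γ) : ContinuousOn γ (Icc 0 1) :=
  (LipschitzOnWith.of_dist_le_mul (K := ⟨dist (γ 0) (γ 1), dist_nonneg⟩) fun s hs t ht => by
    rw [hγ s hs t ht, Real.dist_eq, mul_comm]; rfl).continuousOn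

end IsGeodesic

namespace CAT0

variable {N : Type*} [MetricSpace N] {γ η : ℝ → N}

theorem dist_midpoint_le_of_eq_left (hN : CAT0 N) (hγ : IsGeodesic γ) (hη : IsGeodesic η)
    (h0 : γ 0 = η 0) : dist (γ (1 / 2)) (η (1 / 2)) ≤ 1 / 2 * dist (γ 1) (η 1) := by
  have hγ' := hN.2 (η (1 / 2)) γ hγ
  have hη' := hN.2 (γ 1) η hη
  have hhalf : dist (η (1 / 2)) (η 0) = 1 / 2 * dist (η 0) (η 1) := by
    rw [hη _ (by norm_num) _ (by norm_num)]; norm_num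
  rw [h0, hhalf, dist_comm _ (γ (1 / 2)), dist_comm _ (γ 1), dist_comm (η 0) (γ 1)] at hγ'
  rw [← pow_le_pow_iff_left₀ dist_nonneg (by positivity) two_ne_zero]
  linarith

theorem dist_midpoint_le (hN : CAT0 N) (hγ : IsGeodesic γ) (hη : IsGeodesic η) :
    dist (γ (1 / 2)) (η (1 / 2)) ≤ 1 / 2 * dist (γ 0) (η 0) + 1 / 2 * dist (γ 1) (η 1) := by
  obtain ⟨σ, hσ, hσ0, hσ1⟩ := hN.1 (γ 0) (η 1)
  have hγσ := hN.dist_midpoint_le_of_eq_left hγ hσ hσ0.symm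
  have hση := hN.dist_midpoint_le_of_eq_left
    (hσ.comp_affine (a := 1) (b := 0) (by norm_num) (by norm_num))
    (hη.comp_affine (a := 1) (b := 0) (by norm_num) (by norm_num)) (by norm_num [hσ1])
  norm_num [hσ0] at hγσ hση
  rw [hσ1] at hγσ
  linarith [dist_triangle (γ (1 / 2)) (σ (1 / 2)) (η (1 / 2))]

theorem dist_le_of_isGeodesic (hN : CAT0 N) (hγ : IsGeodesic γ) (hη : IsGeodesic η) {t : ℝ}
    (ht : t ∈ Icc (0 : ℝ) 1) :
    dist (γ t) (η t) ≤ (1 - t) * dist (γ 0) (η 0) + t * dist (γ 1) (η 1) := by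
  have hcont : ContinuousOn (fun s => dist (γ s) (η s)) (Icc 0 1) :=
    continuous_dist.comp_continuousOn (hγ.continuousOn.prodMk hη.continuousOn)
  have hmid : ∀ s ∈ Icc (0 : ℝ) 1, ∀ u ∈ Icc (0 : ℝ) 1,
      dist (γ ((s + u) / 2)) (η ((s + u) / 2)) ≤ (dist (γ s) (η s) + dist (γ u) (η u)) / 2 := by
    intro s hs u hu
    have := hN.dist_midpoint_le (hγ.comp_affine hs hu) (hη.comp_affine hs hu)
    norm_num at this
    rw [show (1 / 2 : ℝ) * s + 1 / 2 * u = (s + u) / 2 by ring] at this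
    linarith
  have := nonpos_of_midpoint_convex (g := fun s => dist (γ s) (η s)
      - ((1 - s) * dist (γ 0) (η 0) + s * dist (γ 1) (η 1)))
    (hcont.sub (by fun_prop)) (fun s hs u hu => by linarith [hmid s hs u hu])
    (by norm_num) (by norm_num) ht
  linarith

end CAT0

theorem inductiveMean_lipschitz_general
    {N : Type*} [MetricSpace N] (hN : CAT0 N)
    (n : ℕ) (x y : Fin (n+1) → N) (sx sy : N)
    (hx : IsInductiveMean n x sx) (hy : IsInductiveMean n y sy) :
    dist sx sy ≤ (1 / (n+1 : ℝ)) * ∑ i, dist (x i) (y i) := by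
  induction n generalizing sx sy with
  | zero => simp [show sx = x 0 from hx, show sy = y 0 from hy]
  | succ n ih =>
    obtain ⟨sx', hx', γ, hγ, rfl, hγ1, rfl⟩ := hx
    obtain ⟨sy', hy', η, hη, rfl, hη1, rfl⟩ := hy
    have ht : 1 / ((n : ℝ) + 2) ∈ Icc (0 : ℝ) 1 :=
      ⟨by positivity, by rw [div_le_one (by positivity)]; linarith⟩
    have hstep := hN.dist_le_of_isGeodesic hγ hη ht
    rw [hγ1, hη1] at hstep
    have hprev := ih _ _ _ _ hx' hy'
    have hweight : 0 ≤ 1 - 1 / ((n : ℝ) + 2) := by linarith [ht.2]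
    rw [Fin.sum_univ_castSucc]
    push_cast
    calc _ ≤ _ := hstep
      _ ≤ (1 - 1 / ((n : ℝ) + 2)) *
            (1 / (n + 1) * ∑ i : Fin (n + 1), dist (x i.castSucc) (y i.castSucc)) +
          1 / ((n : ℝ) + 2) * dist (x (Fin.last (n + 1))) (y (Fin.last (n + 1))) := by gcongr
      _ = _ := by field_simp; ring

/-- The inductive-mean map on `N^(n+1)` is `1/(n+1)`-Lipschitz for the ℓ¹-distance. -/
theorem inductiveMean_lipschitz
    {N : Type*} [MetricSpace N] [CompleteSpace N] (hN : CAT0 N)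
    (n : ℕ) (x y : Fin (n+1) → N) (sx sy : N)
    (hx : IsInductiveMean n x sx) (hy : IsInductiveMean n y sy) :
    dist sx sy ≤ (1 / (n+1 : ℝ)) * ∑ i, dist (x i) (y i) :=
  inductiveMean_lipschitz_general hN n x y sx sy hx hy
end

section
/- Let X be an mm-space and κ > κ' > 0. Then ObsDiam_ℝ(X; −κ') ≥ Sep(X; κ, κ). -/
open MeasureTheory Metric ENNReal

/-- The separation distance `Sep(ν; κ₁, κ₂)`: the supremum of the distance between two
Borel sets of measure at least `κ₁` resp. `κ₂` (and `0` if there is no such pair). -/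
noncomputable def sep {X : Type*} [MetricSpace X] [MeasurableSpace X]
    (ν : Measure X) (κ₁ κ₂ : ℝ) : ℝ≥0∞ :=
  ⨆ (A : Set X) (B : Set X) (_ : MeasurableSet A) (_ : MeasurableSet B)
    (_ : ENNReal.ofReal κ₁ ≤ ν A) (_ : ENNReal.ofReal κ₂ ≤ ν B),
      ⨅ (a ∈ A) (b ∈ B), edist a b

/-- The partial diameter `diam(ν, 1−κ)`: the infimum of the diameters of Borel sets of
measure at least `1−κ`. -/
noncomputable def partialDiam {Y : Type*} [MetricSpace Y] [MeasurableSpace Y]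
    (ν : Measure Y) (κ : ℝ) : ℝ≥0∞ :=
  ⨅ (Y₀ : Set Y) (_ : MeasurableSet Y₀) (_ : ENNReal.ofReal (1 - κ) ≤ ν Y₀),
    EMetric.diam Y₀

/-- The observable diameter `ObsDiam_ℝ(X; −κ)`: the supremum of the partial diameters
`diam(f_*μ, 1−κ)` over all 1-Lipschitz functions `f : X → ℝ`. -/
noncomputable def obsDiam {X : Type*} [MetricSpace X] [MeasurableSpace X]
    (μ : Measure X) (κ : ℝ) : ℝ≥0∞ :=
  ⨆ (f : X → ℝ) (_ : LipschitzWith 1 f), partialDiam (μ.map f) κ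

/-!
Given Borel sets `A`, `B` of measure at least `κ`, test the observable diameter with
the 1-Lipschitz function `f = d(·, A)`. A set `Y₀ ⊆ ℝ` of `f_*μ`-measure at least `1 - κ'`
has a preimage of measure `> 1 - κ`, so the preimage meets both `A` and `B`: hence `Y₀`
contains `0 = f a` and `f b ≥ d(A, B)`, and `diam Y₀ ≥ d(A, B)`.
-/

theorem nonempty_inter_of_ofReal_le_of_ofReal_one_sub_le {Ω : Type*} [MeasurableSpace Ω]
    {μ : Measure Ω} [IsProbabilityMeasure μ] {s t : Set Ω} {κ κ' : ℝ} (ht : MeasurableSet t)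
    (hκ : κ' < κ) (hs : ENNReal.ofReal κ ≤ μ s) (ht' : ENNReal.ofReal (1 - κ') ≤ μ t) :
    (s ∩ t).Nonempty :=
  nonempty_inter_of_measure_lt_add μ ht (Set.subset_univ s) (Set.subset_univ t) <|
    calc μ Set.univ = ENNReal.ofReal 1 := by rw [measure_univ, ENNReal.ofReal_one]
      _ < ENNReal.ofReal (κ + (1 - κ')) :=
          (ENNReal.ofReal_lt_ofReal_iff (by linarith)).2 (by linarith)
      _ ≤ ENNReal.ofReal κ + ENNReal.ofReal (1 - κ') := ENNReal.ofReal_add_le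
      _ ≤ μ s + μ t := add_le_add hs ht'

theorem iInf₂_edist_le_edist_infDist {α : Type*} [MetricSpace α] {A B : Set α} {a b : α}
    (ha : a ∈ A) (hb : b ∈ B) :
    ⨅ x ∈ A, ⨅ y ∈ B, edist x y ≤ edist (infDist a A) (infDist b A) :=
  calc ⨅ x ∈ A, ⨅ y ∈ B, edist x y ≤ infEDist b A :=
        le_infEDist.2 fun x hx =>
          (iInf₂_le x hx).trans ((iInf₂_le b hb).trans_eq (edist_comm x b))
    _ = ENNReal.ofReal (infDist b A) := (ENNReal.ofReal_toReal (infEDist_ne_top ⟨a, ha⟩)).symm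
    _ = edist (infDist a A) (infDist b A) := by
        rw [infDist_zero_of_mem ha, edist_dist, Real.dist_eq, zero_sub, abs_neg,
          abs_of_nonneg infDist_nonneg]

theorem iInf₂_edist_le_partialDiam_map_infDist {X : Type*} [MetricSpace X] [MeasurableSpace X]
    [OpensMeasurableSpace X] (μ : Measure X) [IsProbabilityMeasure μ] {A B : Set X} {κ κ' : ℝ}
    (hA : ENNReal.ofReal κ ≤ μ A) (hB : ENNReal.ofReal κ ≤ μ B) (hκ : κ' < κ) :
    ⨅ x ∈ A, ⨅ y ∈ B, edist x y ≤ partialDiam (μ.map (infDist · A)) κ' := by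
  have hf : Measurable (infDist · A) := (continuous_infDist_pt A).measurable
  refine le_iInf fun Y₀ => le_iInf fun hY₀ => le_iInf fun hμY₀ => ?_
  rw [Measure.map_apply hf hY₀] at hμY₀
  obtain ⟨a, ha, haY₀⟩ :=
    nonempty_inter_of_ofReal_le_of_ofReal_one_sub_le (hf hY₀) hκ hA hμY₀
  obtain ⟨b, hb, hbY₀⟩ :=
    nonempty_inter_of_ofReal_le_of_ofReal_one_sub_le (hf hY₀) hκ hB hμY₀
  exact (iInf₂_edist_le_edist_infDist ha hb).trans (edist_le_ediam_of_mem haY₀ hbY₀)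

theorem sep_le_obsDiam_general
    {X : Type*} [MetricSpace X] [MeasurableSpace X] [BorelSpace X]
    (μ : Measure X) [IsProbabilityMeasure μ]
    (κ κ' : ℝ) (hκ : κ' < κ) :
    sep μ κ κ ≤ obsDiam μ κ' := by
  refine iSup_le fun A => iSup_le fun B => iSup_le fun _ => iSup_le fun _ =>
    iSup_le fun hA => iSup_le fun hB => ?_
  exact (iInf₂_edist_le_partialDiam_map_infDist μ hA hB hκ).trans
    (le_iSup₂ (f := fun f (_ : LipschitzWith 1 f) => partialDiam (μ.map f) κ') _
      (lipschitz_infDist_pt A))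

/-- For `κ > κ' > 0`, `ObsDiam_ℝ(X; −κ') ≥ Sep(X; κ, κ)`. -/
theorem sep_le_obsDiam
    {X : Type*} [MetricSpace X] [MeasurableSpace X] [BorelSpace X]
    (μ : Measure X) [IsProbabilityMeasure μ]
    (κ κ' : ℝ) (hκ' : 0 < κ') (hκ : κ' < κ) :
    sep μ κ κ ≤ obsDiam μ κ' :=
  sep_le_obsDiam_general μ κ κ' hκ
end

section
/- Let X = X₁ × ⋯ × Xₙ be a product of mm-spaces Xᵢ with diam(Xᵢ) ≤ Dᵢ, with the product measure and ℓ¹-distance. Then the concentration function satisfies α_X(r) ≤ exp(−r²/(8D²)) for all r > 0, where D² = Σᵢ Dᵢ². -/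
/-!
The ℓ¹-distance `f` to `A` has bounded differences: changing the `i`-th coordinate moves it by at
most `Dᵢ`. Integrating out one coordinate at a time and applying Hoeffding's lemma to the
conditional mean (McDiarmid's argument) shows that `f - 𝔼 f` is sub-Gaussian with variance proxy
`Σ Dᵢ² / 4`. As `f` vanishes on `A`, which has measure at least `1/2`, the lower tail forces
`𝔼 f` to be small, and the upper tail then bounds the measure of `{r ≤ f}`.
-/

open MeasureTheory ProbabilityTheory Metric Real
open scoped NNReal

universe u

namespace ProbabilityTheory

variable {Ω : Type*} [MeasurableSpace Ω] {μ : Measure Ω}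

lemma HasSubgaussianMGF.mono {X : Ω → ℝ} {c c' : ℝ≥0} (h : HasSubgaussianMGF X c μ)
    (hc : c ≤ c') : HasSubgaussianMGF X c' μ where
  integrable_exp_mul := h.integrable_exp_mul
  mgf_le t := (h.mgf_le t).trans (by gcongr)

lemma hasSubgaussianMGF_of_forall_sub_le [IsProbabilityMeasure μ] {g : Ω → ℝ}
    (hg : AEMeasurable g μ) {d : ℝ≥0} (hd : ∀ ω ω', g ω - g ω' ≤ d) :
    HasSubgaussianMGF (fun ω ↦ g ω - μ[g]) ((d / 2) ^ 2) μ := by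
  have : Nonempty Ω := nonempty_of_isProbabilityMeasure μ
  have hbdd : BddBelow (Set.range g) := ⟨g (Classical.arbitrary Ω) - d, by
    rintro _ ⟨ω, rfl⟩
    linarith [hd (Classical.arbitrary Ω) ω]⟩
  have hmem (ω : Ω) : g ω ∈ Set.Icc (⨅ ω, g ω) ((⨅ ω, g ω) + d) := by
    have : g ω - d ≤ ⨅ ω, g ω := le_ciInf fun ω' ↦ by linarith [hd ω ω']
    exact ⟨ciInf_le hbdd ω, by linarith⟩
  simpa using hasSubgaussianMGF_of_mem_Icc hg (ae_of_all _ hmem)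

variable {α β : Type*} [MeasurableSpace α] [MeasurableSpace β]
  {ν : Measure α} {ρ : Measure β} [IsProbabilityMeasure ν] [IsProbabilityMeasure ρ]

lemma HasSubgaussianMGF.prod_of_sections {F : α × β → ℝ} (hF : Measurable F) {C : ℝ}
    (hFC : ∀ z, |F z| ≤ C) {cX cY : ℝ≥0}
    (hX : HasSubgaussianMGF (fun a ↦ ∫ b, F (a, b) ∂ρ - ∫ z, F z ∂ν.prod ρ) cX ν)
    (hY : ∀ a, HasSubgaussianMGF (fun b ↦ F (a, b) - ∫ b', F (a, b') ∂ρ) cY ρ) :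
    HasSubgaussianMGF (fun z ↦ F z - ∫ z', F z' ∂ν.prod ρ) (cX + cY) (ν.prod ρ) := by
  set m := ∫ z, F z ∂ν.prod ρ
  set g := fun a ↦ ∫ b, F (a, b) ∂ρ
  have hbound : ∀ z, F z - m ∈ Set.Icc (-C - m) (C - m) := fun z ↦ by
    have := abs_le.1 (hFC z)
    constructor <;> linarith
  have hint (t : ℝ) : Integrable (fun z ↦ exp (t * (F z - m))) (ν.prod ρ) :=
    integrable_exp_mul_of_mem_Icc (hF.sub_const m).aemeasurable (ae_of_all _ hbound)
  refine ⟨hint, fun t ↦ ?_⟩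
  calc mgf (fun z ↦ F z - m) (ν.prod ρ) t
      = ∫ a, exp (t * (g a - m)) * mgf (fun b ↦ F (a, b) - g a) ρ t ∂ν := by
        simp only [mgf]
        rw [integral_prod _ (hint t)]
        refine integral_congr_ae (ae_of_all _ fun a ↦ ?_)
        dsimp only
        rw [← integral_const_mul]
        congr with b
        rw [← exp_add]
        ring_nf
    _ ≤ ∫ a, exp (t * (g a - m)) * exp (cY * t ^ 2 / 2) ∂ν := by
        exact integral_mono_of_nonneg (ae_of_all _ fun a ↦ mul_nonneg (exp_pos _).le mgf_nonneg)
          ((hX.integrable_exp_mul t).mul_const _)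
          (ae_of_all _ fun a ↦ mul_le_mul_of_nonneg_left ((hY a).mgf_le t) (exp_pos _).le)
    _ = mgf (fun a ↦ g a - m) ν t * exp (cY * t ^ 2 / 2) := integral_mul_const _ _
    _ ≤ exp (cX * t ^ 2 / 2) * exp (cY * t ^ 2 / 2) := by gcongr; exact hX.mgf_le t
    _ = exp ((cX + cY : ℝ≥0) * t ^ 2 / 2) := by rw [← exp_add]; push_cast; ring_nf

lemma HasSubgaussianMGF.measureReal_ge_le_of_half_le [IsProbabilityMeasure μ] {f : Ω → ℝ}
    {c : ℝ≥0} (h : HasSubgaussianMGF (fun ω ↦ f ω - μ[f]) c μ)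
    (hhalf : 1 / 2 ≤ μ.real {ω | f ω ≤ 0}) {r : ℝ} (hr : 0 < r) :
    μ.real {ω | r ≤ f ω} ≤ exp (-r ^ 2 / (8 * c)) := by
  set m := μ[f]
  rcases le_or_gt (2 * m) r with hrm | hrm
  · calc μ.real {ω | r ≤ f ω} ≤ μ.real {ω | r / 2 ≤ f ω - m} :=
          measureReal_mono fun ω (hω : r ≤ f ω) ↦ show r / 2 ≤ f ω - m by linarith
      _ ≤ exp (-(r / 2) ^ 2 / (2 * c)) := h.measure_ge_le (by positivity)
      _ = exp (-r ^ 2 / (8 * c)) := by ring_nf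
  -- Otherwise the lower tail at `m > r / 2` already makes `exp (-r ^ 2 / (8 * c)) ≥ 1 / 2`,
  -- while `{r ≤ f}` misses `{f ≤ 0}`.
  · have hlow : 1 / 2 ≤ exp (-m ^ 2 / (2 * c)) :=
      hhalf.trans <| (measureReal_mono fun ω (hω : f ω ≤ 0) ↦
        show m ≤ -(f ω - m) by linarith).trans (h.neg.measure_ge_le (by linarith))
    have hf : AEMeasurable f μ := by simpa using h.aemeasurable.add_const m
    have hup : μ.real {ω | r ≤ f ω} ≤ 1 / 2 := by
      have hdisj : Disjoint {ω | r ≤ f ω} {ω | f ω ≤ 0} :=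
        Set.disjoint_left.2 fun ω (h₁ : r ≤ f ω) (h₂ : f ω ≤ 0) ↦ by linarith
      have := measureReal_union₀ (nullMeasurableSet_le hf aemeasurable_const)
        hdisj.aedisjoint ▸ measureReal_le_one (μ := μ)
      linarith
    calc μ.real {ω | r ≤ f ω} ≤ exp (-m ^ 2 / (2 * c)) := hup.trans hlow
      _ = exp (-(2 * m) ^ 2 / (8 * c)) := by ring_nf
      _ ≤ exp (-r ^ 2 / (8 * c)) := by gcongr

end ProbabilityTheory

lemma exists_forall_abs_le_of_forall_sub_le {α : Type*} [Nonempty α] {f : α → ℝ} {c : ℝ}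
    (h : ∀ x y, f x - f y ≤ c) : ∃ C, ∀ x, |f x| ≤ C := by
  let x₀ := Classical.arbitrary α
  exact ⟨|f x₀| + c, fun x ↦ abs_le.2 ⟨by linarith [h x₀ x, neg_abs_le (f x₀)],
    by linarith [h x x₀, le_abs_self (f x₀)]⟩⟩

section HammingWeight

open scoped Classical

variable {n : ℕ} {X : Fin (n + 1) → Type*} (D : Fin (n + 1) → ℝ) (p : Fin (n + 1))

lemma Fin.sum_ite_insertNth_eq_left (a a' : X p) (y : ∀ j, X (p.succAbove j)) :
    ∑ i, (if p.insertNth a y i = p.insertNth a' y i then 0 else D i) =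
      if a = a' then 0 else D p := by
  simp [Fin.sum_univ_succAbove _ p]

lemma Fin.sum_ite_insertNth_eq_right (a : X p) (y y' : ∀ j, X (p.succAbove j)) :
    ∑ i, (if p.insertNth a y i = p.insertNth a y' i then 0 else D i) =
      ∑ j, if y j = y' j then 0 else D (p.succAbove j) := by
  simp [Fin.sum_univ_succAbove _ p]

end HammingWeight

namespace ProbabilityTheory

open scoped Classical in
theorem hasSubgaussianMGF_pi_of_boundedDifferences {n : ℕ} {X : Fin n → Type u}
    [∀ i, MeasurableSpace (X i)] (μ : ∀ i, Measure (X i)) [∀ i, IsProbabilityMeasure (μ i)]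
    (D : Fin n → ℝ≥0) {f : (∀ i, X i) → ℝ} (hf : Measurable f)
    (hfD : ∀ x y, f x - f y ≤ ∑ i, if x i = y i then 0 else (D i : ℝ)) :
    HasSubgaussianMGF (fun x ↦ f x - ∫ y, f y ∂Measure.pi μ) (∑ i, (D i / 2) ^ 2)
      (Measure.pi μ) := by
  induction n with
  | zero =>
    simpa using hasSubgaussianMGF_of_forall_sub_le hf.aemeasurable (d := 0)
      fun x y ↦ by simpa using hfD x y
  | succ n ih =>
    set ρ := Measure.pi fun j ↦ μ (Fin.succAbove 0 j)
    set e := MeasurableEquiv.piFinSuccAbove X 0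
    have he : MeasurePreserving e (Measure.pi μ) ((μ 0).prod ρ) :=
      measurePreserving_piFinSuccAbove μ 0
    set F : X 0 × (∀ j, X (Fin.succAbove 0 j)) → ℝ := fun z ↦ f (e.symm z)
    have hF : Measurable F := hf.comp e.symm.measurable
    have hFD_fst (a a' y) : F (a, y) - F (a', y) ≤ D 0 := by
      refine (hfD (Fin.insertNth 0 a y) (Fin.insertNth 0 a' y)).trans ?_
      rw [Fin.sum_ite_insertNth_eq_left (fun i ↦ (D i : ℝ)) 0 a a' y]
      split_ifs <;> simp
    have hFD_snd (a y y') :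
        F (a, y) - F (a, y') ≤ ∑ j, if y j = y' j then 0 else (D (Fin.succAbove 0 j) : ℝ) :=
      (hfD (Fin.insertNth 0 a y) (Fin.insertNth 0 a y')).trans_eq
        (Fin.sum_ite_insertNth_eq_right (fun i ↦ (D i : ℝ)) 0 a y y')
    have : Nonempty (∀ i, X i) := nonempty_of_isProbabilityMeasure (Measure.pi μ)
    obtain ⟨C, hfC⟩ := exists_forall_abs_le_of_forall_sub_le (c := ∑ i, (D i : ℝ))
      fun x y ↦ (hfD x y).trans (Finset.sum_le_sum fun i _ ↦ by split_ifs <;> simp)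
    have hFC (z) : |F z| ≤ C := hfC _
    have hsec (a) : Integrable (fun y ↦ F (a, y)) ρ :=
      .of_bound (hF.comp measurable_prodMk_left).aestronglyMeasurable C
        (ae_of_all _ fun y ↦ hFC _)
    have hY (a) : HasSubgaussianMGF (fun y ↦ F (a, y) - ∫ y', F (a, y') ∂ρ)
        (∑ j, (D (Fin.succAbove 0 j) / 2) ^ 2) ρ :=
      ih _ _ (f := fun y ↦ F (a, y)) (hF.comp measurable_prodMk_left) (hFD_snd a)
    have hX : HasSubgaussianMGF (fun a ↦ ∫ y, F (a, y) ∂ρ - ∫ z, F z ∂(μ 0).prod ρ)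
        ((D 0 / 2) ^ 2) (μ 0) := by
      rw [integral_prod _ (.of_bound hF.aestronglyMeasurable C (ae_of_all _ hFC))]
      refine hasSubgaussianMGF_of_forall_sub_le
        hF.stronglyMeasurable.integral_prod_right'.measurable.aemeasurable fun a a' ↦ ?_
      rw [← integral_sub (hsec a) (hsec a')]
      refine (integral_mono (hsec a |>.sub (hsec a')) (integrable_const (D 0 : ℝ))
        fun y ↦ ?_).trans_eq (by rw [integral_const, probReal_univ, one_smul])
      exact hFD_fst a a' y
    have hfF : (fun x ↦ f x - ∫ y, f y ∂Measure.pi μ) =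
        (fun z ↦ F z - ∫ z', F z' ∂(μ 0).prod ρ) ∘ e := by
      ext x
      rw [Function.comp_apply, ← he.integral_comp' F]
      simp only [F, MeasurableEquiv.symm_apply_apply]
    rw [hfF, Fin.sum_univ_succAbove _ 0]
    exact .of_map e.measurable.aemeasurable (he.map_eq ▸ (hX.prod_of_sections hF hFC hY))

end ProbabilityTheory

lemma dist_le_toNNReal_of_ediam_univ_le {Y : Type*} [PseudoMetricSpace Y] {d : ℝ}
    (h : ediam (Set.univ : Set Y) ≤ ENNReal.ofReal d) (u v : Y) : dist u v ≤ d.toNNReal :=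
  edist_le_coe.1 (edist_le_of_ediam_le (Set.mem_univ u) (Set.mem_univ v) h)

lemma sum_sq_toNNReal_div_two_le {ι : Type*} [Fintype ι] (d : ι → ℝ) :
    ∑ i, ((d i).toNNReal / 2) ^ 2 ≤ (∑ i, d i ^ 2).toNNReal := by
  rw [Real.le_toNNReal_iff_coe_le (by positivity)]
  push_cast
  refine Finset.sum_le_sum fun i _ ↦ ?_
  rcases le_total 0 (d i) with hdi | hdi
  · rw [Real.coe_toNNReal _ hdi]
    nlinarith
  · simpa [Real.toNNReal_of_nonpos hdi] using sq_nonneg (d i)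

section L1Distance

variable {ι : Type*} [Fintype ι] {X : ι → Type*} [∀ i, PseudoMetricSpace (X i)]

lemma PiLp.dist_eq_sum_of_L1 (x y : PiLp 1 X) : dist x y = ∑ i, dist (x i) (y i) := by
  simpa using PiLp.dist_eq_sum (p := 1) (by norm_num) x y

open scoped Classical in
lemma sum_dist_le_sum_ite {D : ι → ℝ} (hD : ∀ i (u v : X i), dist u v ≤ D i)
    (x y : ∀ i, X i) : ∑ i, dist (x i) (y i) ≤ ∑ i, if x i = y i then 0 else D i :=
  Finset.sum_le_sum fun i _ ↦ by
    split_ifs with h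
    · simp [h]
    · exact hD i _ _

noncomputable def l1InfDist (A : Set (∀ i, X i)) (x : ∀ i, X i) : ℝ :=
  infDist (WithLp.toLp 1 x) (WithLp.toLp 1 '' A)

variable (A : Set (∀ i, X i))

lemma continuous_l1InfDist : Continuous (l1InfDist A) :=
  (continuous_infDist_pt _).comp (PiLp.continuous_toLp 1 X)

lemma l1InfDist_of_mem {a : ∀ i, X i} (ha : a ∈ A) : l1InfDist A a = 0 :=
  infDist_zero_of_mem (Set.mem_image_of_mem _ ha)

lemma l1InfDist_sub_le (x y : ∀ i, X i) :
    l1InfDist A x - l1InfDist A y ≤ ∑ i, dist (x i) (y i) := by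
  have := infDist_le_infDist_add_dist (x := WithLp.toLp 1 x) (y := WithLp.toLp 1 y)
    (s := WithLp.toLp 1 '' A)
  rw [PiLp.dist_eq_sum_of_L1] at this
  exact sub_le_iff_le_add'.2 this

lemma le_l1InfDist {A : Set (∀ i, X i)} (hA : A.Nonempty) {x : ∀ i, X i} {r : ℝ}
    (h : ∀ a ∈ A, r ≤ ∑ i, dist (x i) (a i)) : r ≤ l1InfDist A x := by
  refine not_lt.1 fun hlt ↦ ?_
  obtain ⟨_, ⟨a, ha, rfl⟩, hxa⟩ := (infDist_lt_iff (hA.image _)).1 hlt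
  rw [PiLp.dist_eq_sum_of_L1] at hxa
  exact (h a ha).not_gt hxa

end L1Distance

theorem product_space_concentration_function_general
    {n : ℕ} {X : Fin n → Type*} [∀ i, MetricSpace (X i)] [∀ i, MeasurableSpace (X i)]
    [∀ i, BorelSpace (X i)] [∀ i, SecondCountableTopology (X i)]
    (μ : ∀ i, Measure (X i)) [∀ i, IsProbabilityMeasure (μ i)]
    (D : Fin n → ℝ)
    (hD : ∀ i, EMetric.diam (Set.univ : Set (X i)) ≤ ENNReal.ofReal (D i))
    (r : ℝ) (hr : 0 < r)
    (A : Set (∀ i, X i))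
    (hAhalf : 1/2 ≤ ((Measure.pi μ) A).toReal) :
    ((Measure.pi μ) {x | ∀ a ∈ A, r ≤ ∑ i, dist (x i) (a i)}).toReal ≤
      Real.exp (-(r ^ 2) / (8 * ∑ i, D i ^ 2)) := by
  classical
  have hA : A.Nonempty := Set.nonempty_iff_ne_empty.2 fun hA ↦ by
    simp [hA] at hAhalf
    linarith
  have hsub := (hasSubgaussianMGF_pi_of_boundedDifferences μ (fun i ↦ (D i).toNNReal)
    (continuous_l1InfDist A).measurable fun x y ↦ (l1InfDist_sub_le A x y).trans
      (sum_dist_le_sum_ite (fun i ↦ dist_le_toNNReal_of_ediam_univ_le (hD i)) x y)).mono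
    (sum_sq_toNNReal_div_two_le D)
  have hhalf : 1 / 2 ≤ (Measure.pi μ).real {x | l1InfDist A x ≤ 0} :=
    hAhalf.trans <| measureReal_mono fun a ha ↦ (l1InfDist_of_mem A ha).le
  calc ((Measure.pi μ) {x | ∀ a ∈ A, r ≤ ∑ i, dist (x i) (a i)}).toReal
      ≤ (Measure.pi μ).real {x | r ≤ l1InfDist A x} :=
        measureReal_mono fun x hx ↦ le_l1InfDist hA hx
    _ ≤ _ := hsub.measureReal_ge_le_of_half_le hhalf hr
    _ = _ := by rw [Real.coe_toNNReal _ (by positivity)]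

/-- Concentration function bound for a product of mm-spaces of finite diameters with the
ℓ¹-distance: for every Borel set `A` of measure at least `1/2` and every `r > 0`, the
complement of the open ℓ¹ `r`-neighborhood of `A` has measure at most `exp(−r²/(8D²))`,
where `D² = Σᵢ Dᵢ²`; i.e. `α_X(r) ≤ exp(−r²/(8D²))`. -/
theorem product_space_concentration_function
    {n : ℕ} {X : Fin n → Type*} [∀ i, MetricSpace (X i)] [∀ i, MeasurableSpace (X i)]
    [∀ i, BorelSpace (X i)] [∀ i, SecondCountableTopology (X i)]
    (μ : ∀ i, Measure (X i)) [∀ i, IsProbabilityMeasure (μ i)]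
    (D : Fin n → ℝ)
    (hD : ∀ i, EMetric.diam (Set.univ : Set (X i)) ≤ ENNReal.ofReal (D i))
    (r : ℝ) (hr : 0 < r)
    (A : Set (∀ i, X i)) (hA : MeasurableSet A)
    (hAhalf : 1/2 ≤ ((Measure.pi μ) A).toReal) :
    ((Measure.pi μ) {x | ∀ a ∈ A, r ≤ ∑ i, dist (x i) (a i)}).toReal ≤
      Real.exp (-(r ^ 2) / (8 * ∑ i, D i ^ 2)) :=
  product_space_concentration_function_general μ D hD r hr A hAhalf
end
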